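/- For every fixed λ ∈ Λ, every unit vector ξ ∈ ℝ⁵, and every ρ of the form ρ = μ(g) = ∫ ν a g dv for some nonnegative g, not almost-everywhere zero, with ν(1+|v|²)g integrable, the one-dimensional function z_ξ(s) = z(λ + sξ; ρ) attains its minimum at a unique point s* lying in the open interval I(ξ,λ) = (−s_b(−ξ,λ), s_b(ξ,λ)), where s_b(ξ,λ) = sup{ s : λ + sξ ∈ Λ } (with value +∞ if the boundary of Λ is never met in direction ξ); in particular the minimum is not attained at the endpoints. -/

import Mathlib

/-!
Along the line `s ↦ λ + sξ` the dual function is strictly convex on the open interval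
`I = {s | λ + sξ ∈ Λ}`: the integrand `exp (λ·a(v))` is strictly convex in `λ`, and for
`λ ≠ λ'` the quadratic `(λ - λ')·a(v)` vanishes only on a null set. A strictly convex function
on an open interval has a unique minimiser as soon as it exceeds an interior value on both
sides, so it suffices to find, for `η = ±ξ`, an admissible `b > 0` with `z(λ + bη) ≥ z(λ)`.
If the half-line leaves `Λ` at a finite `s_b`, Fatou's lemma rules out `z < z(λ)` up to `s_b`,
because `ν exp(·a)` is not integrable on `∂Λ`. Otherwise either `η·a > 0` on a set of positive
measure, and the integral grows exponentially, or `η·a < 0` almost everywhere, and then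
`η·ρ = ∫ ν (η·a) g < 0` makes the linear term `-s η·ρ` tend to `+∞`.
-/

open MeasureTheory Real Filter
open scoped Topology

noncomputable section

abbrev V3 : Type := Fin 3 → ℝ

def dot3 (a b : V3) : ℝ := ∑ i, a i * b i

def nsq (v : V3) : ℝ := ∑ i, (v i) ^ 2

abbrev L5 : Type := ℝ × V3 × ℝ

def dot5 (a b : L5) : ℝ := a.1 * b.1 + dot3 a.2.1 b.2.1 + a.2.2 * b.2.2

def aVec (m : ℝ) (v : V3) : L5 := (m, m • v, m * nsq v)

def expA (m : ℝ) (l : L5) (v : V3) : ℝ := Real.exp (dot5 l (aVec m v))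

def momVec (m : ℝ) (ν g : V3 → ℝ) : L5 :=
  (∫ v, ν v * (m * g v), fun i => ∫ v, ν v * (m * v i) * g v,
    ∫ v, ν v * (m * nsq v) * g v)

def zdual (m : ℝ) (ν : V3 → ℝ) (l ρ : L5) : ℝ :=
  (∫ v, ν v * expA m l v) - dot5 l ρ

def entH (z : ℝ) : ℝ := z * Real.log z - z

def dualCLM (ρ : L5) : L5 →L[ℝ] ℝ :=
  LinearMap.toContinuousLinearMap
    { toFun := fun δ => dot5 δ ρ
      map_add' := by
        intro a b
        simp [dot5, dot3, Prod.fst_add, Prod.snd_add, Pi.add_apply, add_mul,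
          Finset.sum_add_distrib]
        ring
      map_smul' := by
        intro c a
        simp only [dot5, dot3, Prod.smul_fst, Prod.smul_snd, Pi.smul_apply,
          smul_eq_mul, Finset.mul_sum, RingHom.id_apply]
        ring_nf
        rw [Finset.mul_sum]
        ring_nf }

open Set

theorem StrictConvexOn.existsUnique_isMinOn {I : Set ℝ} {f : ℝ → ℝ}
    (hf : StrictConvexOn ℝ I f) (hI : IsOpen I) {a b c : ℝ} (ha : a ∈ I) (hb : b ∈ I)
    (hac : a < c) (hcb : c < b) (hfa : f c ≤ f a) (hfb : f c ≤ f b) :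
    ∃! s, s ∈ I ∧ IsMinOn f I s := by
  have hsub : Icc a b ⊆ I := hf.1.ordConnected.out ha hb
  obtain ⟨s, hs, hmin⟩ := isCompact_Icc.exists_isMinOn (nonempty_Icc.2 (hac.trans hcb).le)
    ((hf.convexOn.continuousOn hI).mono hsub)
  have hc : c ∈ I := hsub ⟨hac.le, hcb.le⟩
  -- Outside `[a, b]`, strict convexity on `[t, c]` or `[c, t]` puts `f a` or `f b` below `f t`.
  have hglobal : IsMinOn f I s := by
    intro t ht
    rcases lt_or_ge t a with hta | hat
    · have := hf.lt_on_openSegment ht hc (hta.trans hac).ne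
        (by rw [openSegment_eq_Ioo (hta.trans hac)]; exact ⟨hta, hac⟩)
      exact (hmin (left_mem_Icc.2 (hac.trans hcb).le)).trans
        (lt_max_iff.1 this |>.resolve_right hfa.not_gt).le
    rcases le_or_gt t b with htb | hbt
    · exact hmin ⟨hat, htb⟩
    · have := hf.lt_on_openSegment hc ht (hcb.trans hbt).ne
        (by rw [openSegment_eq_Ioo (hcb.trans hbt)]; exact ⟨hcb, hbt⟩)
      exact (hmin (right_mem_Icc.2 (hac.trans hcb).le)).trans
        (lt_max_iff.1 this |>.resolve_left hfb.not_gt).le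
  exact ⟨s, ⟨hsub hs, hglobal⟩,
    fun s' hs' => hf.eq_of_isMinOn hs'.2 hglobal hs'.1 (hsub hs)⟩

theorem StrictConvexOn.comp_add_smul {E : Type*} [AddCommGroup E] [Module ℝ E] {S : Set E}
    {f : E → ℝ} (hf : StrictConvexOn ℝ S f) (x : E) {v : E} (hv : v ≠ 0) :
    StrictConvexOn ℝ {s : ℝ | x + s • v ∈ S} (fun s => f (x + s • v)) := by
  have hline : ∀ s t a b : ℝ, a + b = 1 →
      x + (a • s + b • t) • v = a • (x + s • v) + b • (x + t • v) := by
    intro s t a b hab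
    linear_combination (norm := module) (-hab) • x
  refine ⟨fun s hs t ht a b ha hb hab => ?_, fun s hs t ht hst a b ha hb hab => ?_⟩
  · simpa only [mem_ofPred_eq, hline s t a b hab] using hf.1 hs ht ha hb hab
  · simpa only [hline s t a b hab] using
      hf.2 hs ht (by simpa using (smul_left_injective ℝ hv).ne hst) ha hb hab

theorem volume_eq_zero_of_forall_insertNth {n : ℕ} (i : Fin (n + 1))
    {S : Set (Fin (n + 1) → ℝ)} (hS : MeasurableSet S)
    (h : ∀ y : Fin n → ℝ, volume {x : ℝ | i.insertNth x y ∈ S} = 0) : volume S = 0 := by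
  have he := (volume_preserving_piFinSuccAbove (fun _ : Fin (n + 1) => ℝ) i).symm
  rw [← he.measure_preimage hS.nullMeasurableSet, Measure.volume_eq_prod,
    Measure.prod_apply_symm (he.measurable hS)]
  exact (lintegral_congr fun y => h y).trans lintegral_zero

theorem finite_setOf_quadratic_eq_zero {a b c : ℝ} (h : a ≠ 0 ∨ b ≠ 0) :
    {x : ℝ | a * x ^ 2 + b * x + c = 0}.Finite := by
  open Polynomial in
  have hp : C a * X ^ 2 + C b * X + C c ≠ 0 := by
    intro hp
    rcases h with h | h
    · exact h (by simpa using congrArg (coeff · 2) hp)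
    · exact h (by simpa using congrArg (coeff · 1) hp)
  refine (Polynomial.finite_setOfPred_isRoot hp).subset fun x hx => ?_
  simpa using hx

section ExpIntegral

variable {α : Type*} [MeasurableSpace α] {μ : Measure α} {w : α → ℝ}

theorem strictConvexOn_integral_mul_exp {E : Type*} [AddCommGroup E] [Module ℝ E]
    {S : Set E} (hS : Convex ℝ S) (hw : ∀ x, 0 < w x) (a : α → Module.Dual ℝ E)
    (hint : ∀ l ∈ S, Integrable (fun x => w x * exp (a x l)) μ)
    (hsep : ∀ l ∈ S, ∀ l' ∈ S, l ≠ l' → ∃ᵐ x ∂μ, a x l ≠ a x l') :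
    StrictConvexOn ℝ S (fun l => ∫ x, w x * exp (a x l) ∂μ) := by
  refine ⟨hS, fun l hl l' hl' hne s t hs ht hst => ?_⟩
  have h1 := (hint l hl).const_mul s
  have h2 := (hint l' hl').const_mul t
  have h3 := hint _ (hS hl hl' hs.le ht.le hst)
  set G : α → ℝ := fun x =>
    s * (w x * exp (a x l)) + t * (w x * exp (a x l')) - w x * exp (a x (s • l + t • l'))
  have hG : ∀ x, G x =
      w x * (s * exp (a x l) + t * exp (a x l') - exp (s * a x l + t * a x l')) := by
    intro x
    simp only [G, map_add, map_smul, smul_eq_mul]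
    ring
  have hG0 : 0 ≤ G := fun x => by
    rw [hG]
    exact mul_nonneg (hw x).le (sub_nonneg.2 (by
      simpa only [smul_eq_mul] using convexOn_exp.2 (mem_univ (a x l)) (mem_univ (a x l'))
        hs.le ht.le hst))
  have hsupp : {x | a x l ≠ a x l'} ⊆ Function.support G := fun x hx => by
    rw [Function.mem_support, hG]
    refine (mul_pos (hw x) (sub_pos.2 ?_)).ne'
    simpa only [smul_eq_mul] using
      strictConvexOn_exp.2 (mem_univ (a x l)) (mem_univ (a x l')) hx hs ht hst
  have hpos : 0 < ∫ x, G x ∂μ :=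
    (integral_pos_iff_support_of_nonneg hG0 ((h1.add h2).sub h3)).2
      (pos_iff_ne_zero.2 fun h => frequently_ae_iff.1 (hsep l hl l' hl' hne)
        (measure_mono_null hsupp h))
  have hGeq : ∫ x, G x ∂μ = s * ∫ x, w x * exp (a x l) ∂μ
      + t * ∫ x, w x * exp (a x l') ∂μ - ∫ x, w x * exp (a x (s • l + t • l')) ∂μ := by
    simp only [G]
    rw [integral_sub, integral_add, integral_const_mul, integral_const_mul]
    exacts [h1, h2, h1.add h2, h3]
  simp only [smul_eq_mul]
  linarith

theorem integrable_of_tendsto_of_integral_le {ι : Type*} {u : Filter ι} [u.IsCountablyGenerated]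
    [u.NeBot] {F : ι → α → ℝ} {f : α → ℝ} (hF : ∀ i, AEStronglyMeasurable (F i) μ)
    (hF0 : ∀ i x, 0 ≤ F i x) (hlim : ∀ᵐ x ∂μ, Tendsto (fun i => F i x) u (𝓝 (f x)))
    {C : ℝ} (hC : ∀ᶠ i in u, Integrable (F i) μ ∧ ∫ x, F i x ∂μ ≤ C) :
    Integrable f μ := by
  refine ⟨aestronglyMeasurable_of_tendsto_ae u hF hlim, ?_⟩
  have hbound : ∀ᶠ i in u, ∫⁻ x, ‖F i x‖ₑ ∂μ ≤ ENNReal.ofReal C := by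
    filter_upwards [hC] with i ⟨hi, hiC⟩
    simp_rw [Real.enorm_of_nonneg (hF0 i _)]
    rw [← ofReal_integral_eq_lintegral_ofReal hi (Eventually.of_forall (hF0 i))]
    exact ENNReal.ofReal_le_ofReal hiC
  calc ∫⁻ x, ‖f x‖ₑ ∂μ = ∫⁻ x, liminf (fun i => ‖F i x‖ₑ) u ∂μ :=
        lintegral_congr_ae (by filter_upwards [hlim] with x hx using hx.enorm.liminf_eq.symm)
    _ ≤ liminf (fun i => ∫⁻ x, ‖F i x‖ₑ ∂μ) u :=
        lintegral_liminf_le' fun i => (hF i).enorm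
    _ ≤ ENNReal.ofReal C := (liminf_le_liminf hbound).trans_eq (liminf_const _)
    _ < ⊤ := ENNReal.ofReal_lt_top

theorem exists_pos_measure_setOf_lt_ne_zero {A : α → ℝ} (h : ∃ᵐ x ∂μ, 0 < A x) :
    ∃ ε : ℝ, 0 < ε ∧ μ {x | ε < A x} ≠ 0 := by
  obtain ⟨n, hn⟩ : ∃ n : ℕ, μ {x | 1 / ((n : ℝ) + 1) < A x} ≠ 0 := by
    by_contra! hn
    refine frequently_ae_iff.1 h (measure_mono_null (fun x hx => ?_) (measure_iUnion_null hn))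
    exact mem_iUnion.2 (exists_nat_one_div_lt (show 0 < A x from hx))
  exact ⟨_, Nat.one_div_pos_of_nat, hn⟩

theorem exists_mul_exp_le_integral_mul_exp {A B : α → ℝ} (hw : ∀ x, 0 < w x)
    (hA : Measurable A)
    (hint : ∀ s, 0 ≤ s → Integrable (fun x => w x * exp (B x + s * A x)) μ)
    (hpos : ∃ᵐ x ∂μ, 0 < A x) :
    ∃ c ε : ℝ, 0 < c ∧ 0 < ε ∧
      ∀ s, 0 ≤ s → c * exp (ε * s) ≤ ∫ x, w x * exp (B x + s * A x) ∂μ := by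
  obtain ⟨ε, hε, hE⟩ := exists_pos_measure_setOf_lt_ne_zero hpos
  have hint0 : Integrable (fun x => w x * exp (B x)) μ := by simpa using hint 0 le_rfl
  have hw_exp : ∀ x, 0 < w x * exp (B x) := fun x => mul_pos (hw x) (exp_pos _)
  refine ⟨∫ x in {x | ε < A x}, w x * exp (B x) ∂μ, ε, ?_, hε, fun s hs => ?_⟩
  · rw [setIntegral_pos_iff_support_of_nonneg_ae (Eventually.of_forall fun x => (hw_exp x).le)
      hint0.integrableOn, Function.support_eq_univ fun x => (hw_exp x).ne', univ_inter]
    exact pos_iff_ne_zero.2 hE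
  calc (∫ x in {x | ε < A x}, w x * exp (B x) ∂μ) * exp (ε * s)
      = ∫ x in {x | ε < A x}, exp (ε * s) * (w x * exp (B x)) ∂μ := by
        rw [integral_const_mul, mul_comm]
    _ ≤ ∫ x in {x | ε < A x}, w x * exp (B x + s * A x) ∂μ := by
        refine setIntegral_mono_on (hint0.const_mul _).integrableOn (hint s hs).integrableOn
          (measurableSet_lt measurable_const hA) fun x hx => ?_
        rw [mul_left_comm, ← exp_add]
        exact mul_le_mul_of_nonneg_left (exp_le_exp.2 (by nlinarith [show ε < A x from hx]))
          (hw x).le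
    _ ≤ ∫ x, w x * exp (B x + s * A x) ∂μ :=
        setIntegral_le_integral (hint s hs)
          (Eventually.of_forall fun x => (mul_pos (hw x) (exp_pos _)).le)

theorem tendsto_integral_mul_exp_sub_atTop {A B : α → ℝ} (hw : ∀ x, 0 < w x)
    (hA : Measurable A)
    (hint : ∀ s, 0 ≤ s → Integrable (fun x => w x * exp (B x + s * A x)) μ)
    (hpos : ∃ᵐ x ∂μ, 0 < A x) (q : ℝ) :
    Tendsto (fun s => (∫ x, w x * exp (B x + s * A x) ∂μ) - s * q) atTop atTop := by
  obtain ⟨c, ε, hc, hε, hlower⟩ := exists_mul_exp_le_integral_mul_exp hw hA hint hpos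
  have hquad : Tendsto (fun s : ℝ => s * (c * ε ^ 2 / 2 * s - q)) atTop atTop :=
    tendsto_id.atTop_mul_atTop₀
      (tendsto_atTop_add_const_right _ (-q) (tendsto_id.const_mul_atTop (by positivity)))
  refine tendsto_atTop_mono' atTop ?_ hquad
  filter_upwards [eventually_ge_atTop 0] with s hs
  have hexp := mul_le_mul_of_nonneg_left (quadratic_le_exp_of_nonneg (mul_nonneg hε.le hs)) hc.le
  nlinarith [hlower s hs, mul_nonneg (mul_nonneg hc.le hε.le) hs]

end ExpIntegral

def dualDomain : Set L5 := {l | l.2.2 < 0}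

theorem isOpen_dualDomain : IsOpen dualDomain :=
  isOpen_lt (continuous_snd.comp continuous_snd) continuous_const

theorem convex_dualDomain : Convex ℝ dualDomain :=
  convex_halfSpace_lt (f := fun l : L5 => l.2.2)
    (LinearMap.snd ℝ V3 ℝ ∘ₗ LinearMap.snd ℝ ℝ (V3 × ℝ)).isLinear 0

theorem sq_le_nsq (v : V3) (i : Fin 3) : v i ^ 2 ≤ nsq v :=
  Finset.single_le_sum (f := fun j => v j ^ 2) (fun _ _ => sq_nonneg _) (Finset.mem_univ i)

theorem nsq_nonneg (v : V3) : 0 ≤ nsq v :=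
  Finset.sum_nonneg fun i _ => sq_nonneg (v i)

theorem add_smul_snd_snd (l η : L5) (s : ℝ) : (l + s • η).2.2 = l.2.2 + s * η.2.2 := rfl

theorem dot5_eq_dualCLM (l ρ : L5) : dot5 l ρ = dualCLM ρ l := rfl

theorem dot5_comm (a b : L5) : dot5 a b = dot5 b a := by
  simp only [dot5, dot3, mul_comm]

theorem dot5_add_smul (l η w : L5) (s : ℝ) :
    dot5 (l + s • η) w = dot5 l w + s * dot5 η w := by
  simp only [dot5_eq_dualCLM, map_add, map_smul, smul_eq_mul]

theorem dualCLM_smul_aVec (m : ℝ) (η : L5) (c : ℝ) (v : V3) :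
    dualCLM η (c • aVec m v) = c * dot5 η (aVec m v) := by
  rw [map_smul, smul_eq_mul, ← dot5_eq_dualCLM, dot5_comm]

theorem dot5_aVec (m : ℝ) (η : L5) (v : V3) :
    dot5 η (aVec m v) = m * (η.1 + dot3 η.2.1 v + η.2.2 * nsq v) := by
  simp only [dot5, aVec, dot3, Pi.smul_apply, smul_eq_mul, mul_add, Finset.mul_sum]
  ring_nf

@[fun_prop]
theorem continuous_dot5_aVec (m : ℝ) (η : L5) : Continuous fun v => dot5 η (aVec m v) := by
  simp only [dot5_aVec, dot3, nsq]
  fun_prop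

theorem expA_add_smul (m : ℝ) (l η : L5) (s : ℝ) (v : V3) :
    expA m (l + s • η) v = exp (dot5 l (aVec m v) + s * dot5 η (aVec m v)) := by
  rw [expA, dot5_add_smul]

theorem zdual_add_smul (m : ℝ) (ν : V3 → ℝ) (l η ρ : L5) (s : ℝ) :
    zdual m ν (l + s • η) ρ =
      (∫ v, ν v * exp (dot5 l (aVec m v) + s * dot5 η (aVec m v)))
        - dot5 l ρ - s * dot5 η ρ := by
  simp only [zdual, expA_add_smul, dot5_add_smul]
  ring

theorem dot3_insertNth (c : V3) (i : Fin 3) (x : ℝ) (y : Fin 2 → ℝ) :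
    dot3 c (i.insertNth x y) = c i * x + ∑ j, c (i.succAbove j) * y j := by
  simp [dot3, Fin.sum_univ_succAbove _ i]

theorem nsq_insertNth (i : Fin 3) (x : ℝ) (y : Fin 2 → ℝ) :
    nsq (i.insertNth x y) = x ^ 2 + ∑ j, y j ^ 2 := by
  simp [nsq, Fin.sum_univ_succAbove _ i]

theorem ae_dot5_aVec_ne_zero {m : ℝ} (hm : m ≠ 0) {η : L5} (hη : η ≠ 0) :
    ∀ᵐ v, dot5 η (aVec m v) ≠ 0 := by
  simp only [dot5_aVec, ne_eq, mul_eq_zero, hm, false_or]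
  by_cases hlin : η.2.2 = 0 ∧ η.2.1 = 0
  · have h1 : η.1 ≠ 0 := fun h1 => hη (Prod.ext h1 (Prod.ext hlin.2 hlin.1))
    exact Eventually.of_forall fun v => by simpa [dot3, hlin.1, hlin.2] using h1
  obtain ⟨i, hi⟩ : ∃ i, η.2.2 ≠ 0 ∨ η.2.1 i ≠ 0 := by
    by_contra! h
    exact hlin ⟨(h 0).1, funext fun i => (h i).2⟩
  -- Along the coordinate `i` the quadric is a nonconstant polynomial, so every slice is finite.
  rw [ae_iff]
  simp only [not_not]
  have hcont : Continuous fun v => η.1 + dot3 η.2.1 v + η.2.2 * nsq v := by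
    simp only [dot3, nsq]
    fun_prop
  refine volume_eq_zero_of_forall_insertNth i (isClosed_eq hcont continuous_const).measurableSet
    fun y => Set.Finite.measure_zero ?_ _
  convert finite_setOf_quadratic_eq_zero (c := η.1 + ∑ j, η.2.1 (i.succAbove j) * y j
    + η.2.2 * ∑ j, y j ^ 2) hi using 3 with x
  simp only [mem_ofPred_eq, dot3_insertNth, nsq_insertNth]
  ring_nf

theorem strictConvexOn_zdual {m : ℝ} (hm : m ≠ 0) {ν : V3 → ℝ} (hν : ∀ v, 0 < ν v)
    (hint : ∀ l : L5, l.2.2 < 0 → Integrable (fun v => ν v * expA m l v)) (ρ : L5) :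
    StrictConvexOn ℝ dualDomain (fun l => zdual m ν l ρ) := by
  have hsep : ∀ l ∈ dualDomain, ∀ l' ∈ dualDomain, l ≠ l' →
      ∃ᵐ v, dualCLM (aVec m v) l ≠ dualCLM (aVec m v) l' := fun l _ l' _ hne =>
    (ae_dot5_aVec_ne_zero hm (sub_ne_zero.2 hne)).frequently.mono fun v hv => by
      rwa [dot5_eq_dualCLM, map_sub, sub_ne_zero] at hv
  exact (strictConvexOn_integral_mul_exp convex_dualDomain hν (fun v => dualCLM (aVec m v))
    hint hsep).sub_concaveOn ((dualCLM ρ).toLinearMap.concaveOn convex_dualDomain)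

theorem norm_aVec_le (m : ℝ) (v : V3) : ‖aVec m v‖ ≤ |m| * (1 + nsq v) := by
  have hv : ‖v‖ ≤ 1 + nsq v := (pi_norm_le_iff_of_nonneg (by linarith [nsq_nonneg v])).2
    fun i => by
      rw [Real.norm_eq_abs]
      nlinarith [sq_abs (v i), sq_nonneg (|v i| - 1), sq_le_nsq v i]
  simp only [aVec, norm_prod_le_iff, norm_smul, norm_mul, Real.norm_eq_abs,
    abs_of_nonneg (nsq_nonneg v)]
  refine ⟨le_mul_of_one_le_right (abs_nonneg m) (by linarith [nsq_nonneg v]),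
    mul_le_mul_of_nonneg_left hv (abs_nonneg m),
    mul_le_mul_of_nonneg_left (by linarith) (abs_nonneg m)⟩

theorem continuous_aVec (m : ℝ) : Continuous (aVec m) := by
  unfold aVec nsq
  fun_prop

theorem integrable_smul_aVec (m : ℝ) {ν g : V3 → ℝ} (hν : Measurable ν) (hg : Measurable g)
    (hint : Integrable (fun v => ν v * (1 + nsq v) * g v)) :
    Integrable (fun v => (ν v * g v) • aVec m v) := by
  refine (hint.norm.const_mul |m|).mono'
    ((hν.mul hg).smul (continuous_aVec m).measurable).aestronglyMeasurable
    (Eventually.of_forall fun v => ?_)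
  rw [norm_smul, Real.norm_eq_abs, Real.norm_eq_abs, abs_mul, abs_mul, abs_mul,
    abs_of_nonneg (by linarith [nsq_nonneg v] : 0 ≤ 1 + nsq v)]
  calc |ν v| * |g v| * ‖aVec m v‖ ≤ |ν v| * |g v| * (|m| * (1 + nsq v)) :=
        mul_le_mul_of_nonneg_left (norm_aVec_le m v) (by positivity)
    _ = |m| * (|ν v| * (1 + nsq v) * |g v|) := by ring

theorem momVec_eq_integral {m : ℝ} {ν g : V3 → ℝ}
    (hint : Integrable (fun v => (ν v * g v) • aVec m v)) :
    momVec m ν g = ∫ v, (ν v * g v) • aVec m v := by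
  have h2 := hint.snd
  ext
  · rw [fst_integral hint]
    simp only [momVec, aVec, Prod.smul_fst, smul_eq_mul]
    congr 1 with v
    ring
  · rw [snd_integral hint, fst_integral h2, eval_integral (fun i => h2.fst.eval i)]
    simp only [momVec, aVec, Prod.smul_snd, Prod.smul_fst, Pi.smul_apply, smul_eq_mul]
    congr 1 with v
    ring
  · rw [snd_integral hint, snd_integral h2]
    simp only [momVec, aVec, Prod.smul_snd, smul_eq_mul]
    congr 1 with v
    ring

theorem dot5_momVec {m : ℝ} {ν g : V3 → ℝ}
    (hint : Integrable (fun v => (ν v * g v) • aVec m v)) (η : L5) :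
    dot5 η (momVec m ν g) = ∫ v, ν v * dot5 η (aVec m v) * g v := by
  rw [momVec_eq_integral hint, dot5_comm, dot5_eq_dualCLM,
    ← (dualCLM η).integral_comp_comm hint]
  congr 1 with v
  rw [dualCLM_smul_aVec]
  ring

section Coercive

variable {m : ℝ} {ν g : V3 → ℝ} {l η : L5}

theorem dot5_momVec_neg (hm : m ≠ 0) (hν : ∀ v, 0 < ν v)
    (hint : Integrable (fun v => (ν v * g v) • aVec m v)) (hg0 : ∀ v, 0 ≤ g v)
    (hgne : ¬ g =ᵐ[volume] fun _ => (0 : ℝ)) (hη : η ≠ 0)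
    (hA : ∀ᵐ v, dot5 η (aVec m v) ≤ 0) : dot5 η (momVec m ν g) < 0 := by
  rw [dot5_momVec hint]
  set f : V3 → ℝ := fun v => ν v * dot5 η (aVec m v) * g v
  have hfint : Integrable f := ((dualCLM η).integrable_comp hint).congr
    (Eventually.of_forall fun v => by simp only [f, dualCLM_smul_aVec]; ring)
  have hf0 : 0 ≤ᵐ[volume] fun v => -f v := hA.mono fun v hv =>
    neg_nonneg.2 (mul_nonpos_of_nonpos_of_nonneg (mul_nonpos_of_nonneg_of_nonpos (hν v).le hv)
      (hg0 v))
  have hfne : ¬ (fun v => -f v) =ᵐ[volume] 0 := fun h => hgne <| by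
    filter_upwards [h, ae_dot5_aVec_ne_zero hm hη] with v h1 h2
    simpa [f, (hν v).ne', h2] using h1
  have := (integral_nonneg_of_ae hf0).lt_of_ne'
    (mt (integral_eq_zero_iff_of_nonneg_ae hf0 hfint.neg).1 hfne)
  rw [integral_neg] at this
  linarith

theorem exists_pos_zdual_le_of_pos (hν_meas : Measurable ν) (hν : ∀ v, 0 < ν v)
    (hint : ∀ l : L5, l.2.2 < 0 → Integrable (fun v => ν v * expA m l v))
    (hbdry : ∀ l : L5, Integrable (fun v => ν v * expA m l v) → l.2.2 < 0)
    (hl : l.2.2 < 0) (hη : 0 < η.2.2) (ρ : L5) :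
    ∃ b : ℝ, 0 < b ∧ l + b • η ∈ dualDomain ∧
      zdual m ν l ρ ≤ zdual m ν (l + b • η) ρ := by
  by_contra! h
  set sb := -l.2.2 / η.2.2
  have hsb : 0 < sb := div_pos (neg_pos.2 hl) hη
  have hsb_eq : l.2.2 + sb * η.2.2 = 0 := by rw [div_mul_cancel₀ _ hη.ne']; ring
  have hmem : ∀ s ∈ Ioo 0 sb, (l + s • η).2.2 < 0 := fun s hs => by
    rw [add_smul_snd_snd]; nlinarith [hs.2]
  have h0 := zdual_add_smul m ν l η ρ 0
  simp only [zero_smul, add_zero, zero_mul] at h0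
  have hbound : ∀ s ∈ Ioo 0 sb,
      Integrable (fun v => ν v * exp (dot5 l (aVec m v) + s * dot5 η (aVec m v))) ∧
      ∫ v, ν v * exp (dot5 l (aVec m v) + s * dot5 η (aVec m v)) ≤
        zdual m ν l ρ + dot5 l ρ + sb * |dot5 η ρ| := fun s hs => by
    refine ⟨by simpa only [expA_add_smul] using hint _ (hmem s hs), ?_⟩
    have hlt := h s hs.1 (hmem s hs)
    rw [zdual_add_smul] at hlt
    nlinarith [mul_le_mul_of_nonneg_left (le_abs_self (dot5 η ρ)) hs.1.le,
      mul_le_mul_of_nonneg_right hs.2.le (abs_nonneg (dot5 η ρ))]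
  have hcont : ∀ v, Continuous fun s : ℝ =>
      ν v * exp (dot5 l (aVec m v) + s * dot5 η (aVec m v)) := fun v => by fun_prop
  have hsb_int : Integrable (fun v => ν v * expA m (l + sb • η) v) := by
    simp only [expA_add_smul]
    refine integrable_of_tendsto_of_integral_le (u := 𝓝[<] sb)
      (fun s => (hν_meas.mul (by fun_prop)).aestronglyMeasurable)
      (fun s v => (mul_pos (hν v) (exp_pos _)).le)
      (Eventually.of_forall fun v => ((hcont v).tendsto sb).mono_left nhdsWithin_le_nhds)
      (eventually_of_mem (Ioo_mem_nhdsLT hsb) hbound)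
  have := hbdry _ hsb_int
  rw [add_smul_snd_snd] at this
  linarith

theorem exists_pos_zdual_le_of_nonpos (hm : m ≠ 0) (hν_meas : Measurable ν)
    (hν : ∀ v, 0 < ν v)
    (hint : ∀ l : L5, l.2.2 < 0 → Integrable (fun v => ν v * expA m l v))
    (hl : l.2.2 < 0) (hη0 : η ≠ 0) (hη : η.2.2 ≤ 0) (hg_meas : Measurable g)
    (hg0 : ∀ v, 0 ≤ g v) (hgne : ¬ g =ᵐ[volume] fun _ => (0 : ℝ))
    (hgint : Integrable (fun v => ν v * (1 + nsq v) * g v)) :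
    ∃ b : ℝ, 0 < b ∧ l + b • η ∈ dualDomain ∧
      zdual m ν l (momVec m ν g) ≤ zdual m ν (l + b • η) (momVec m ν g) := by
  set q := dot5 η (momVec m ν g)
  set F : ℝ → ℝ := fun s => ∫ v, ν v * exp (dot5 l (aVec m v) + s * dot5 η (aVec m v))
  have hmem : ∀ s : ℝ, 0 ≤ s → (l + s • η).2.2 < 0 := fun s hs => by
    rw [add_smul_snd_snd]; nlinarith
  have htend : Tendsto (fun s => F s - s * q) atTop atTop := by
    by_cases hpos : ∃ᵐ v, 0 < dot5 η (aVec m v)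
    · exact tendsto_integral_mul_exp_sub_atTop hν (continuous_dot5_aVec m η).measurable
        (fun s hs => by simpa only [expA_add_smul] using hint _ (hmem s hs)) hpos q
    · have hq : q < 0 := dot5_momVec_neg hm hν (integrable_smul_aVec m hν_meas hg_meas hgint)
        hg0 hgne hη0 (by simpa only [not_frequently, not_lt] using hpos)
      refine tendsto_atTop_mono (fun s => ?_) (tendsto_id.atTop_mul_const (neg_pos.2 hq))
      have : 0 ≤ F s := integral_nonneg fun v => (mul_pos (hν v) (exp_pos _)).le
      simp only [id]
      linarith
  obtain ⟨b, hbF, hb⟩ := ((htend.eventually_ge_atTop (F 0)).and (eventually_gt_atTop 0)).exists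
  refine ⟨b, hb, hmem b hb.le, ?_⟩
  have h0 := zdual_add_smul m ν l η (momVec m ν g) 0
  simp only [zero_smul, add_zero, zero_mul] at h0
  simp only [F, zero_mul, add_zero] at hbF
  rw [h0, zdual_add_smul]
  linarith

theorem exists_pos_zdual_le (hm : m ≠ 0) (hν_meas : Measurable ν) (hν : ∀ v, 0 < ν v)
    (hint : ∀ l : L5, l.2.2 < 0 → Integrable (fun v => ν v * expA m l v))
    (hbdry : ∀ l : L5, Integrable (fun v => ν v * expA m l v) → l.2.2 < 0)
    (hl : l.2.2 < 0) (hη : η ≠ 0) (hg_meas : Measurable g)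
    (hg0 : ∀ v, 0 ≤ g v) (hgne : ¬ g =ᵐ[volume] fun _ => (0 : ℝ))
    (hgint : Integrable (fun v => ν v * (1 + nsq v) * g v)) :
    ∃ b : ℝ, 0 < b ∧ l + b • η ∈ dualDomain ∧
      zdual m ν l (momVec m ν g) ≤ zdual m ν (l + b • η) (momVec m ν g) :=
  (lt_or_ge 0 η.2.2).elim (exists_pos_zdual_le_of_pos hν_meas hν hint hbdry hl · _)
    (exists_pos_zdual_le_of_nonpos hm hν_meas hν hint hl hη · hg_meas hg0 hgne hgint)

end Coercive

theorem min_on_line_general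
    (m : ℝ) (hm : 0 < m)
    (ν : V3 → ℝ) (hνmeas : Measurable ν) (hνpos : ∀ v, 0 < ν v)
    (hass : ∀ l : L5, Integrable (fun v => ν v * expA m l v) ↔ l.2.2 < 0)
    (l : L5) (hl : l.2.2 < 0)
    (ξ : L5) (hξ : ‖ξ‖ = 1)
    (g : V3 → ℝ) (hgmeas : Measurable g) (hg0 : ∀ v, 0 ≤ g v)
    (hgne : ¬ g =ᵐ[volume] (fun _ => (0 : ℝ)))
    (hgint : Integrable (fun v => ν v * (1 + nsq v) * g v)) :
    ∃! s : ℝ, (l + s • ξ).2.2 < 0 ∧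
      ∀ t : ℝ, (l + t • ξ).2.2 < 0 →
        zdual m ν (l + s • ξ) (momVec m ν g) ≤
          zdual m ν (l + t • ξ) (momVec m ν g) := by
  have hξ0 : ξ ≠ 0 := by
    rintro rfl
    simp at hξ
  have hint : ∀ l : L5, l.2.2 < 0 → Integrable (fun v => ν v * expA m l v) :=
    fun l => (hass l).2
  have hcoercive := fun η (hη : η ≠ 0) => exists_pos_zdual_le hm.ne' hνmeas hνpos hint
    (fun l => (hass l).1) hl hη hgmeas hg0 hgne hgint
  obtain ⟨b, hb, hbΛ, hzb⟩ := hcoercive ξ hξ0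
  obtain ⟨a, ha, haΛ, hza⟩ := hcoercive (-ξ) (neg_ne_zero.2 hξ0)
  rw [smul_neg, ← neg_smul] at haΛ hza
  have hconvex := (strictConvexOn_zdual hm.ne' hνpos hint (momVec m ν g)).comp_add_smul l hξ0
  obtain ⟨s, ⟨hs, hmin⟩, huniq⟩ := hconvex.existsUnique_isMinOn
    (isOpen_dualDomain.preimage (by fun_prop)) haΛ hbΛ (neg_neg_of_pos ha) hb
    (by simpa using hza) (by simpa using hzb)
  exact ⟨s, ⟨hs, fun t ht => hmin ht⟩,
    fun t ht => huniq t ⟨ht.1, fun u hu => ht.2 u hu⟩⟩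

/-- for `λ ∈ Λ`, a unit direction `ξ`, and `ρ = μ(g)` for an
admissible `g`, the function `s ↦ z(λ + sξ; ρ)` attains its minimum at a unique
point of the open interval `I(ξ,λ) = {s : λ + sξ ∈ Λ}`; in particular the
minimum is not attained at the endpoints. -/
theorem min_on_line
    (m : ℝ) (hm : 0 < m)
    (ν : V3 → ℝ) (hνmeas : Measurable ν) (hνpos : ∀ v, 0 < ν v)
    (hass : ∀ l : L5, Integrable (fun v => ν v * expA m l v) ↔ l.2.2 < 0)
    (hass2 : ∀ l : L5, l.2.2 < 0 →
      Integrable (fun v => ν v * (1 + nsq v) * expA m l v))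
    (l : L5) (hl : l.2.2 < 0)
    (ξ : L5) (hξ : ‖ξ‖ = 1)
    (g : V3 → ℝ) (hgmeas : Measurable g) (hg0 : ∀ v, 0 ≤ g v)
    (hgne : ¬ g =ᵐ[volume] (fun _ => (0 : ℝ)))
    (hgint : Integrable (fun v => ν v * (1 + nsq v) * g v)) :
    ∃! s : ℝ, (l + s • ξ).2.2 < 0 ∧
      ∀ t : ℝ, (l + t • ξ).2.2 < 0 →
        zdual m ν (l + s • ξ) (momVec m ν g) ≤
          zdual m ν (l + t • ξ) (momVec m ν g) :=
  min_on_line_general m hm ν hνmeas hνpos hass l hl ξ hξ g hgmeas hg0 hgne hgint
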